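/- arXiv:1605.08873 — 3 statements merged into one kernel-verified Lean document; each statement's English description precedes it below -/
import Mathlib

section
/- Let X be a compact metric space and f : X → X a homeomorphism. If every point of X is positively recurrent for f, then for every x ∈ X the closure of the forward orbit {fⁿ(x) : n ≥ 0} equals the closure of the full orbit {fⁿ(x) : n ∈ ℤ}. -/
/-! Let `A` be the closure of the forward orbit of `x`. Recurrence of `x` puts the whole
forward orbit, hence `A`, inside the closure of `{fⁿ⁺¹ x}`, whose image under `f⁻¹` lies in
`A`. So `A` is a closed set invariant under both `f` and `f⁻¹`, and therefore contains the full
orbit. -/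

open Set

theorem Equiv.Perm.zpow_apply_mem_of_mapsTo {α : Type*} {e : Equiv.Perm α} {s : Set α}
    (he : MapsTo e s s) (he_symm : MapsTo e.symm s s) (n : ℤ) {x : α} (hx : x ∈ s) :
    (e ^ n) x ∈ s := by
  induction n using Int.induction_on with
  | zero => simpa using hx
  | succ n ih =>
    rw [add_comm, zpow_add, zpow_one, Equiv.Perm.mul_apply]
    exact he ih
  | pred n ih =>
    rw [sub_eq_neg_add, zpow_add, zpow_neg_one, Equiv.Perm.mul_apply, Equiv.Perm.inv_def]
    exact he_symm ih

theorem range_iterate_subset_range_zpow {α : Type*} (e : Equiv.Perm α) (x : α) :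
    range (fun n : ℕ => (⇑e)^[n] x) ⊆ range fun n : ℤ => (e ^ n) x := by
  rintro _ ⟨n, rfl⟩
  exact ⟨n, by simp only [zpow_natCast, Equiv.Perm.iterate_eq_pow]⟩

section

variable {X : Type*} [TopologicalSpace X]

theorem mapsTo_closure_range_iterate {f : X → X} (hf : Continuous f) (x : X) :
    MapsTo f (closure (range fun n : ℕ => f^[n] x)) (closure (range fun n : ℕ => f^[n] x)) := by
  refine MapsTo.closure ?_ hf
  rintro _ ⟨n, rfl⟩
  exact ⟨n + 1, Function.iterate_succ_apply' f n x⟩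

theorem Homeomorph.mapsTo_symm_closure_range_iterate (f : X ≃ₜ X) {x : X}
    (hx : x ∈ closure (range fun n : ℕ => f^[n + 1] x)) :
    MapsTo f.symm (closure (range fun n : ℕ => f^[n] x))
      (closure (range fun n : ℕ => f^[n] x)) := by
  have hsub :
      closure (range fun n : ℕ => f^[n] x) ⊆ closure (range fun n : ℕ => f^[n + 1] x) := by
    refine closure_minimal ?_ isClosed_closure
    rintro _ ⟨_ | n, rfl⟩
    · exact hx
    · exact subset_closure ⟨n, rfl⟩
  refine (MapsTo.closure ?_ f.symm.continuous).mono_left hsub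
  rintro _ ⟨n, rfl⟩
  exact ⟨n, by simp only [Function.iterate_succ_apply', Homeomorph.symm_apply_apply]⟩

end

theorem stmt_0_general {X : Type*} [MetricSpace X] (f : X ≃ₜ X)
    (hrec : ∀ x : X, x ∈ closure (Set.range fun n : ℕ => (⇑f)^[n + 1] x)) :
    ∀ x : X,
      closure (Set.range fun n : ℕ => (⇑f)^[n] x) =
        closure (Set.range fun n : ℤ => (f.toEquiv ^ n) x) := by
  intro x
  refine (closure_mono (range_iterate_subset_range_zpow f.toEquiv x)).antisymm ?_
  refine closure_minimal ?_ isClosed_closure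
  rintro _ ⟨n, rfl⟩
  exact Equiv.Perm.zpow_apply_mem_of_mapsTo (mapsTo_closure_range_iterate f.continuous x)
    (f.mapsTo_symm_closure_range_iterate (hrec x)) n (subset_closure ⟨0, rfl⟩)

/-- Forward orbit closure equals full orbit closure under positive recurrence. -/
theorem stmt_0 {X : Type*} [MetricSpace X] [CompactSpace X] (f : X ≃ₜ X)
    (hrec : ∀ x : X, x ∈ closure (Set.range fun n : ℕ => (⇑f)^[n + 1] x)) :
    ∀ x : X,
      closure (Set.range fun n : ℕ => (⇑f)^[n] x) =
        closure (Set.range fun n : ℤ => (f.toEquiv ^ n) x) :=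
  stmt_0_general f hrec
end

section
/- There is no homeomorphism f of a non-compact, locally compact, Hausdorff topological space X (with X nonempty) such that every forward orbit {fⁿ(x) : n ≥ 0} is dense in X. (Gottschalk's theorem, used as Theorem B of [G] in the paper.) -/
/-!
Fix a compact neighbourhood `K` of some point. Since every forward orbit meets the open set
`interior K` at a positive time, compactness of `K` bounds the return time to `K` by some `N`.
Hence the forward orbit of a point of `interior K` visits `K` at least once in every window of
length `N`, so it lies in the compact set `⋃ j ≤ N, fʲ(K)`. This orbit is dense, so `X` would be
compact.
-/

open Set Function

lemma Nat.exists_mem_le_le_add_of_bounded_gaps {S : Set ℕ} {N : ℕ} (h0 : 0 ∈ S)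
    (hgap : ∀ m ∈ S, ∃ r, 0 < r ∧ r ≤ N ∧ m + r ∈ S) (n : ℕ) :
    ∃ m ∈ S, m ≤ n ∧ n ≤ m + N := by
  induction n with
  | zero => exact ⟨0, h0, le_rfl, Nat.zero_le _⟩
  | succ n ih =>
    obtain ⟨m, hmS, hmn, hnm⟩ := ih
    by_cases hlt : n + 1 ≤ m + N
    · exact ⟨m, hmS, by omega, hlt⟩
    · obtain ⟨r, hr0, hrN, hrS⟩ := hgap m hmS
      exact ⟨m + r, hrS, by omega, by omega⟩

section

variable {X : Type*} {f : X → X}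

lemma iterate_mem_biUnion_image_of_bounded_return_time {K : Set X} {N : ℕ}
    (hret : ∀ x ∈ K, ∃ r, 0 < r ∧ r ≤ N ∧ f^[r] x ∈ K) {x : X} (hx : x ∈ K) (n : ℕ) :
    f^[n] x ∈ ⋃ j ∈ {j | j ≤ N}, f^[j] '' K := by
  have hgap : ∀ m ∈ {m | f^[m] x ∈ K}, ∃ r, 0 < r ∧ r ≤ N ∧ m + r ∈ {m | f^[m] x ∈ K} := by
    intro m hm
    obtain ⟨r, hr0, hrN, hr⟩ := hret _ hm
    exact ⟨r, hr0, hrN, by rwa [mem_ofPred_eq, add_comm, iterate_add_apply]⟩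
  obtain ⟨m, hm, hmn, hnm⟩ := Nat.exists_mem_le_le_add_of_bounded_gaps hx hgap n
  refine mem_iUnion₂.2 ⟨n - m, by simp only [mem_ofPred_eq]; omega, f^[m] x, hm, ?_⟩
  rw [← iterate_add_apply, Nat.sub_add_cancel hmn]

variable [TopologicalSpace X]

lemma exists_iterate_succ_mem_of_dense_orbits (h : ∀ x, Dense (range fun n : ℕ => f^[n] x))
    {U : Set X} (hU : IsOpen U) (hne : U.Nonempty) (x : X) : ∃ n, f^[n + 1] x ∈ U := by
  obtain ⟨_, ⟨n, rfl⟩, hn⟩ := (h (f x)).exists_mem_open hU hne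
  exact ⟨n, by rwa [iterate_succ_apply]⟩

lemma IsCompact.exists_bounded_return_time {K : Set X} (hK : IsCompact K) (hf : Continuous f)
    (hret : ∀ x ∈ K, ∃ n, f^[n + 1] x ∈ interior K) :
    ∃ N, ∀ x ∈ K, ∃ r, 0 < r ∧ r ≤ N ∧ f^[r] x ∈ K := by
  obtain ⟨t, ht⟩ := hK.elim_finite_subcover (fun n => f^[n + 1] ⁻¹' interior K)
    (fun n => isOpen_interior.preimage (hf.iterate _))
    (fun x hx => mem_iUnion.2 (hret x hx))
  refine ⟨t.sup id + 1, fun x hx => ?_⟩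
  obtain ⟨n, hnt, hn⟩ := mem_iUnion₂.1 (ht hx)
  exact ⟨n + 1, n.succ_pos, Nat.succ_le_succ (t.le_sup (f := id) hnt), interior_subset hn⟩

end

/-- Gottschalk: no forward minimal homeomorphism on a nonempty non-compact
locally compact Hausdorff space. -/
theorem stmt_2 {X : Type*} [TopologicalSpace X] [Nonempty X] [LocallyCompactSpace X]
    [T2Space X] (hX : ¬ CompactSpace X) (f : X ≃ₜ X) :
    ¬ ∀ x : X, Dense (Set.range fun n : ℕ => (⇑f)^[n] x) := by
  intro h
  obtain ⟨x₀⟩ := ‹Nonempty X›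
  obtain ⟨K, hK, hKx₀⟩ := exists_compact_mem_nhds x₀
  have hx₀ : x₀ ∈ interior K := mem_interior_iff_mem_nhds.2 hKx₀
  obtain ⟨N, hN⟩ := hK.exists_bounded_return_time f.continuous fun x _ =>
    exists_iterate_succ_mem_of_dense_orbits h isOpen_interior ⟨x₀, hx₀⟩ x
  set C := ⋃ j ∈ {j | j ≤ N}, (⇑f)^[j] '' K
  have hC : IsCompact C :=
    (finite_le_nat N).isCompact_biUnion fun j _ => hK.image (f.continuous.iterate j)
  have horbit : range (fun n => (⇑f)^[n] x₀) ⊆ C :=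
    range_subset_iff.2 <|
      iterate_mem_biUnion_image_of_bounded_return_time hN (interior_subset hx₀)
  have hunivC : univ ⊆ C := (h x₀).closure_eq ▸ closure_minimal horbit hC.isClosed
  exact hX (isCompact_univ_iff.1 (hC.of_isClosed_subset isClosed_univ hunivC))
end

section
/- Let X be a locally compact Hausdorff space and f : X → X a homeomorphism such that the union U of dense orbits is open and nonempty, every point of X is positively recurrent, and every forward orbit of a point of U is dense in X. Then X is compact. (This encapsulates the argument in Remark 3.1 via Gottschalk's theorem: a quasi-minimal homeomorphism with all points positively recurrent on a non-compact locally compact space cannot exist unless the space is compact.) -/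
/-!
Pick a point `x` with dense orbit and a compact neighbourhood `K` of it inside the open set of
such points. Every point of `f '' K` has a dense forward orbit, hence enters `interior K`, and by
compactness it does so within a uniform number `N` of steps. So the forward orbit of `x` returns
to `interior K` at least every `N + 1` steps and therefore stays in the compact set
`⋃ m ≤ N, f^[m] '' K`. Being dense, that orbit forces the whole space to be compact.
-/

open Set

theorem Equiv.Perm.range_zpow_apply_apply {α : Type*} (e : Equiv.Perm α) (x : α) :
    range (fun n : ℤ => (e ^ n) (e x)) = range (fun n : ℤ => (e ^ n) x) := by
  have hshift : (fun n : ℤ => (e ^ n) (e x)) = (fun n : ℤ => (e ^ n) x) ∘ (· + 1) := by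
    funext n
    simp [zpow_add_one, Equiv.Perm.mul_apply]
  rw [hshift]
  exact (Equiv.addRight (1 : ℤ)).surjective.range_comp _

theorem IsCompact.exists_forall_exists_le_iterate_mem {X : Type*} [TopologicalSpace X]
    {f : X → X} (hf : Continuous f) {K V : Set X} (hK : IsCompact K) (hV : IsOpen V)
    (hKV : ∀ z ∈ K, ∃ n, f^[n] z ∈ V) : ∃ N, ∀ z ∈ K, ∃ n ≤ N, f^[n] z ∈ V := by
  have hcover : K ⊆ ⋃ N, ⋃ n ≤ N, f^[n] ⁻¹' V := fun z hz => by
    obtain ⟨n, hn⟩ := hKV z hz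
    exact mem_iUnion.2 ⟨n, mem_iUnion₂.2 ⟨n, le_rfl, hn⟩⟩
  have hmono : Monotone fun N => ⋃ n ≤ N, f^[n] ⁻¹' V := fun _ _ hNM =>
    biUnion_mono (fun _ hn => le_trans hn hNM) fun _ _ => subset_rfl
  obtain ⟨N, hN⟩ := hK.elim_directed_cover _
    (fun N => isOpen_biUnion fun n _ => hV.preimage (hf.iterate n)) hcover hmono.directed_le
  refine ⟨N, fun z hz => ?_⟩
  obtain ⟨n, hn, hnV⟩ := mem_iUnion₂.1 (hN hz)
  exact ⟨n, hn, hnV⟩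

theorem Function.iterate_mem_biUnion_image_of_forall_exists_le {α : Type*} {f : α → α}
    {V : Set α} {N : ℕ} (hret : ∀ z ∈ V, ∃ n ≤ N, f^[n + 1] z ∈ V) {z : α} (hz : z ∈ V)
    (j : ℕ) : f^[j] z ∈ ⋃ m ∈ Iic N, f^[m] '' V := by
  induction j using Nat.strong_induction_on generalizing z with
  | _ j ih =>
    by_cases hjN : j ≤ N
    · exact mem_biUnion hjN (mem_image_of_mem _ hz)
    · obtain ⟨n, hn, hnV⟩ := hret z hz
      have hsplit : f^[j] z = f^[j - (n + 1)] (f^[n + 1] z) := by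
        rw [← Function.iterate_add_apply, Nat.sub_add_cancel (by omega)]
      rw [hsplit]
      exact ih _ (by omega) hnV

theorem Dense.compactSpace_of_subset_isCompact {X : Type*} [TopologicalSpace X] [T2Space X]
    {s C : Set X} (hs : Dense s) (hC : IsCompact C) (hsC : s ⊆ C) : CompactSpace X := by
  have hCuniv : C = univ := by
    simpa [hs.closure_eq, hC.isClosed.closure_eq] using closure_mono hsC
  exact isCompact_univ_iff.1 (hCuniv ▸ hC)

theorem stmt_11_general {X : Type*} [TopologicalSpace X] [LocallyCompactSpace X] [T2Space X]
    (f : X ≃ₜ X)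
    (hopen : IsOpen {x : X | Dense (Set.range fun n : ℤ => (f.toEquiv ^ n) x)})
    (hne : {x : X | Dense (Set.range fun n : ℤ => (f.toEquiv ^ n) x)}.Nonempty)
    (hfwd : ∀ x ∈ {x : X | Dense (Set.range fun n : ℤ => (f.toEquiv ^ n) x)},
      Dense (Set.range fun n : ℕ => (⇑f)^[n] x)) :
    CompactSpace X := by
  obtain ⟨x, hx⟩ := hne
  obtain ⟨K, hK, hxK, hKU⟩ := exists_compact_subset hopen hx
  have hvisit : ∀ z ∈ f '' K, ∃ n, (⇑f)^[n] z ∈ interior K := by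
    rintro _ ⟨z, hz, rfl⟩
    have hfz : Dense (range fun n : ℤ => (f.toEquiv ^ n) (f.toEquiv z)) := by
      rw [Equiv.Perm.range_zpow_apply_apply]
      exact hKU hz
    obtain ⟨_, ⟨n, rfl⟩, hn⟩ := (hfwd _ hfz).exists_mem_open isOpen_interior ⟨x, hxK⟩
    exact ⟨n, hn⟩
  obtain ⟨N, hN⟩ := (hK.image f.continuous).exists_forall_exists_le_iterate_mem f.continuous
    isOpen_interior hvisit
  have hret : ∀ z ∈ interior K, ∃ n ≤ N, (⇑f)^[n + 1] z ∈ interior K := fun z hz =>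
    hN (f z) (mem_image_of_mem f (interior_subset hz))
  refine (hfwd x hx).compactSpace_of_subset_isCompact
    ((finite_Iic N).isCompact_biUnion fun m _ => hK.image (f.continuous.iterate m)) ?_
  rintro _ ⟨j, rfl⟩
  exact biUnion_mono subset_rfl (fun m _ => image_mono interior_subset)
    (Function.iterate_mem_biUnion_image_of_forall_exists_le hret hxK j)

/-- A quasi-minimal homeomorphism of a locally compact Hausdorff space all of
whose points are positively recurrent and whose dense-orbit points have dense
forward orbits forces the space to be compact. -/
theorem stmt_11 {X : Type*} [TopologicalSpace X] [LocallyCompactSpace X] [T2Space X]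
    (f : X ≃ₜ X)
    (hopen : IsOpen {x : X | Dense (Set.range fun n : ℤ => (f.toEquiv ^ n) x)})
    (hne : {x : X | Dense (Set.range fun n : ℤ => (f.toEquiv ^ n) x)}.Nonempty)
    (hrec : ∀ x : X, x ∈ closure (Set.range fun n : ℕ => (⇑f)^[n + 1] x))
    (hfwd : ∀ x ∈ {x : X | Dense (Set.range fun n : ℤ => (f.toEquiv ^ n) x)},
      Dense (Set.range fun n : ℕ => (⇑f)^[n] x)) :
    CompactSpace X :=
  stmt_11_general f hopen hne hfwd
end
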